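/- arXiv:2207.13741 — 5 statements merged into one kernel-verified Lean document; each statement's English description precedes it below -/
import Mathlib

section
/- Let 0 < ν < 1 and let a > 1 be a real number. Then ∑_{j ∈ ℕ, j > a/(1-ν)} e^{-νj}(νj)^{j-1}/j! ≤ e² · exp(-(10a/21)(1-ν)). -/
/-!
Stirling's bound `j! ≥ √(2πj) (j/e)^j` gives
`b_ν(j) ≤ (ν e^{1-ν})^{j-1} e^{1-ν} / (j √(2πj))`, and `log ν ≤ -(1-ν) - (1-ν)²/2` turns
`ν e^{1-ν}` into at most `e^{-(1-ν)²/2}`. For `j > a/(1-ν)` the resulting exponent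
`(1-ν) - (j-1)(1-ν)²/2` is at most `2 - (10a/21)(1-ν)`, because `10/21 < 1/2`. What is left is
`∑_{j ≥ 2} j^{-3/2} / √(2π) ≤ 1`, which follows by telescoping
`j^{-3/2} ≤ 2 (1/√(j-1) - 1/√j)`.
-/

open Real

lemma log_one_sub_le {x : ℝ} (hx0 : 0 ≤ x) (hx1 : x < 1) : log (1 - x) ≤ -x - x ^ 2 / 2 := by
  have := sum_le_hasSum (Finset.range 2) (fun i _ => by positivity)
    (hasSum_pow_div_log_of_abs_lt_one (by rwa [abs_of_nonneg hx0]))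
  norm_num [Finset.sum_range_succ] at this
  linarith

lemma inv_mul_sqrt_le_two_mul_sub {y : ℝ} (hy : 0 < y) :
    ((y + 1) * √(y + 1))⁻¹ ≤ 2 * ((√y)⁻¹ - (√(y + 1))⁻¹) := by
  have hs : 0 < √y := sqrt_pos.2 hy
  have hst : √y ≤ √(y + 1) := sqrt_le_sqrt (by linarith)
  have ht : 0 < √(y + 1) := hs.trans_le hst
  have hsq : √(y + 1) ^ 2 - √y ^ 2 = 1 := by rw [sq_sqrt hy.le, sq_sqrt (by linarith)]; ring
  have hcube : (y + 1) * √(y + 1) = √(y + 1) ^ 3 := by rw [pow_succ, sq_sqrt (by linarith)]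
  rw [hcube, inv_sub_inv hs.ne' ht.ne', inv_eq_one_div, mul_div_assoc',
    div_le_div_iff₀ (by positivity) (by positivity)]
  nlinarith [mul_le_mul_of_nonneg_left hst ht.le, mul_pos hs ht]

lemma tsum_le_of_le_sub_succ {f g : ℕ → ℝ} (hf : ∀ n, 0 ≤ f n) (hg : ∀ n, 0 ≤ g n)
    (h : ∀ n, f n ≤ g n - g (n + 1)) : ∑' n, f n ≤ g 0 :=
  Real.tsum_le_of_sum_range_le hf fun n =>
    (Finset.sum_le_sum fun i _ => h i).trans (by rw [Finset.sum_range_sub']; linarith [hg n])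

noncomputable def borelMass (ν : ℝ) (j : ℕ) : ℝ :=
  exp (-ν * j) * (ν * j) ^ (j - 1) / j.factorial

lemma borelMass_le_stirling {ν : ℝ} (hν : 0 ≤ ν) {j : ℕ} (hj : j ≠ 0) :
    borelMass ν j ≤ ν ^ (j - 1) * exp ((1 - ν) * j) / (j * √(2 * π * j)) := by
  obtain ⟨m, rfl⟩ := Nat.exists_eq_succ_of_ne_zero hj
  calc borelMass ν (m + 1)
      ≤ exp (-ν * (m + 1)) * (ν * (m + 1)) ^ m /
          (√(2 * π * (m + 1)) * ((m + 1) / exp 1) ^ (m + 1)) := by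
        unfold borelMass
        push_cast
        gcongr
        exact_mod_cast Stirling.le_factorial_stirling (m + 1)
    _ = ν ^ m * exp ((1 - ν) * (m + 1)) / ((m + 1) * √(2 * π * (m + 1))) := by
        have hexp : exp ((1 - ν) * (m + 1)) = exp (-ν * (m + 1)) * exp 1 ^ (m + 1) := by
          rw [← exp_nat_mul, ← exp_add]; push_cast; ring_nf
        rw [hexp, mul_pow, div_pow, pow_succ _ m]
        field_simp
    _ = _ := by push_cast; rfl

lemma borelMass_le_exp {ν : ℝ} (hν0 : 0 < ν) (hν1 : ν ≤ 1) {j : ℕ} (hj : j ≠ 0) :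
    borelMass ν j ≤ exp ((1 - ν) - (j - 1) * (1 - ν) ^ 2 / 2) / (j * √(2 * π * j)) := by
  refine (borelMass_le_stirling hν0.le hj).trans ?_
  have hlog : log ν ≤ -(1 - ν) - (1 - ν) ^ 2 / 2 := by
    simpa using log_one_sub_le (sub_nonneg.2 hν1) (by linarith : 1 - ν < 1)
  have hj1 : (1 : ℝ) ≤ j := by exact_mod_cast Nat.one_le_iff_ne_zero.2 hj
  have hpow : ν ^ (j - 1) = exp ((j - 1) * log ν) := by
    rw [← Nat.cast_pred (Nat.pos_of_ne_zero hj), exp_nat_mul, exp_log hν0]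
  rw [hpow, ← exp_add]
  gcongr
  nlinarith

lemma borelMass_le_of_lt_mul {ν a : ℝ} (hν0 : 0 < ν) (hν1 : ν ≤ 1) {j : ℕ} (hj : j ≠ 0)
    (ha : a < j * (1 - ν)) :
    borelMass ν j ≤ exp 2 * exp (-(10 * a / 21) * (1 - ν)) / (j * √(2 * π * j)) := by
  refine (borelMass_le_exp hν0 hν1 hj).trans ?_
  rw [← exp_add]
  gcongr
  have hx0 : 0 ≤ 1 - ν := sub_nonneg.2 hν1
  nlinarith [mul_le_mul_of_nonneg_right ha.le hx0,
    mul_nonneg (Nat.cast_nonneg j) (sq_nonneg (1 - ν))]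

lemma borelMass_add_two_le {ν a : ℝ} (hν0 : 0 < ν) (hν1 : ν ≤ 1) {n : ℕ}
    (ha : a < (n + 2) * (1 - ν)) :
    borelMass ν (n + 2) ≤
      exp 2 * exp (-(10 * a / 21) * (1 - ν)) * ((√(n + 1))⁻¹ - (√(n + 2))⁻¹) := by
  have h2π : 2 ≤ √(2 * π) := le_sqrt_of_sq_le (by nlinarith [pi_gt_three])
  have htel := inv_mul_sqrt_le_two_mul_sub (y := n + 1) (by positivity)
  rw [add_assoc, one_add_one_eq_two] at htel
  calc borelMass ν (n + 2)
      ≤ exp 2 * exp (-(10 * a / 21) * (1 - ν)) / ((n + 2 : ℕ) * √(2 * π * (n + 2 : ℕ))) :=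
        borelMass_le_of_lt_mul hν0 hν1 (by omega) (by push_cast; exact ha)
    _ ≤ exp 2 * exp (-(10 * a / 21) * (1 - ν)) / (2 * ((n + 2) * √(n + 2))) := by
        rw [sqrt_mul (by positivity)]
        push_cast
        refine div_le_div_of_nonneg_left (by positivity) (by positivity) ?_
        have hpos : (0 : ℝ) ≤ (n + 2) * √(n + 2) := by positivity
        nlinarith [mul_le_mul_of_nonneg_right h2π hpos]
    _ = exp 2 * exp (-(10 * a / 21) * (1 - ν)) * (((n + 2) * √(n + 2))⁻¹ / 2) := by
        field_simp
    _ ≤ _ := by gcongr; linarith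

/-- Tail bound for the total progeny of a Poisson(ν) branching process (Borel distribution):
for `0 < ν < 1` and `a > 1`,
`∑_{j > a/(1-ν)} e^{-νj}(νj)^{j-1}/j! ≤ e² exp(-(10a/21)(1-ν))`. -/
theorem borel_tail_bound_scaled (ν : ℝ) (hν0 : 0 < ν) (hν1 : ν < 1) (a : ℝ) (ha : a > 1) :
    (∑' j : ℕ, if a / (1 - ν) < (j : ℝ) then
        Real.exp (-ν * j) * (ν * j) ^ (j - 1) / (Nat.factorial j) else 0)
      ≤ Real.exp 2 * Real.exp (-(10 * a / 21) * (1 - ν)) := by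
  have hx : 0 < 1 - ν := sub_pos.2 hν1
  set C := exp 2 * exp (-(10 * a / 21) * (1 - ν))
  set T : ℕ → ℝ := fun j => if a / (1 - ν) < j then borelMass ν j else 0
  have hsupp : Function.support T ⊆ Set.range (· + 2) := fun j hj => by
    have hlt : a / (1 - ν) < j := by by_contra h; exact hj (if_neg h)
    have h1 : 1 < a / (1 - ν) := (lt_div_iff₀ hx).2 (by linarith)
    have : 1 < j := by exact_mod_cast h1.trans hlt
    exact ⟨j - 2, by simp only; omega⟩
  have hT : ∀ n : ℕ, T (n + 2) ≤ C * (√(n + 1))⁻¹ - C * (√((n + 1 : ℕ) + 1))⁻¹ := by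
    intro n
    rw [← mul_sub, Nat.cast_succ, add_assoc, one_add_one_eq_two]
    simp only [T]
    split_ifs with hlt
    · exact borelMass_add_two_le hν0 hν1.le (by push_cast at hlt; exact (div_lt_iff₀ hx).1 hlt)
    · exact mul_nonneg (by positivity) (sub_nonneg.2 (by gcongr; linarith))
  change ∑' j, T j ≤ C
  rw [← (add_left_injective 2).tsum_eq hsupp]
  refine (tsum_le_of_le_sub_succ (fun n => ?_) (fun n => by positivity) hT).trans ?_
  · simp only [T, borelMass]; split_ifs <;> positivity
  · simp
end

section
/- Let μ > 0, 0 < α < 1, and Δ > 0 with Δ ≥ 5α²/(1-α). Define σ²(Δ) = μΔ/(1-α)³ + α²μ(1 - e^{-2(1-α)Δ})/(2(1-α)⁴) - 2αμ(1 - e^{-(1-α)Δ})/(1-α)⁴. Then σ²(Δ) ≤ 1.1 · μΔ/(1-α)³. -/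
open Real

noncomputable def hawkesBinVariance (μ α Δ : ℝ) : ℝ :=
  μ * Δ / (1 - α) ^ 3
    + α ^ 2 * μ * (1 - exp (-2 * (1 - α) * Δ)) / (2 * (1 - α) ^ 4)
    - 2 * α * μ * (1 - exp (-(1 - α) * Δ)) / (1 - α) ^ 4

section

variable {μ α Δ : ℝ}

/-- Both exponential brackets lie in `[0, 1]`; bound the first by `1` and the second by `0`. -/
theorem hawkesBinVariance_le_linear_add_const (hμ : 0 ≤ μ) (hα0 : 0 ≤ α) (hα1 : α < 1)
    (hΔ : 0 ≤ Δ) :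
    hawkesBinVariance μ α Δ ≤ μ * Δ / (1 - α) ^ 3 + α ^ 2 * μ / (2 * (1 - α) ^ 4) := by
  have hdecay : 0 ≤ 1 - exp (-(1 - α) * Δ) := by
    rw [sub_nonneg, exp_le_one_iff]
    nlinarith
  have hsecond : α ^ 2 * μ * (1 - exp (-2 * (1 - α) * Δ)) / (2 * (1 - α) ^ 4)
      ≤ α ^ 2 * μ / (2 * (1 - α) ^ 4) := by
    refine div_le_div_of_nonneg_right ?_ (by positivity)
    exact mul_le_of_le_one_right (by positivity) (sub_le_self _ (exp_pos _).le)
  have hthird : 0 ≤ 2 * α * μ * (1 - exp (-(1 - α) * Δ)) / (1 - α) ^ 4 := by positivity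
  unfold hawkesBinVariance
  linarith

theorem const_le_tenth_linear_of_five_sq_le (hμ : 0 ≤ μ) (hα1 : α < 1)
    (h : 5 * α ^ 2 ≤ Δ * (1 - α)) :
    α ^ 2 * μ / (2 * (1 - α) ^ 4) ≤ 0.1 * (μ * Δ / (1 - α) ^ 3) := by
  have hc : 0 < 1 - α := sub_pos.2 hα1
  rw [div_le_iff₀ (by positivity),
    show 0.1 * (μ * Δ / (1 - α) ^ 3) * (2 * (1 - α) ^ 4) = 0.2 * μ * (Δ * (1 - α)) by
      field_simp; ring]
  nlinarith [mul_le_mul_of_nonneg_left h hμ]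

end

theorem hawkes_variance_upper_bound_general (μ α Δ : ℝ) (hμ : 0 < μ) (hα0 : 0 < α) (hα1 : α < 1)
    (hΔ : Δ ≥ 5 * α ^ 2 / (1 - α)) :
    μ * Δ / (1 - α) ^ 3
      + α ^ 2 * μ * (1 - Real.exp (-2 * (1 - α) * Δ)) / (2 * (1 - α) ^ 4)
      - 2 * α * μ * (1 - Real.exp (-(1 - α) * Δ)) / (1 - α) ^ 4
      ≤ 1.1 * (μ * Δ / (1 - α) ^ 3) := by
  have hc : 0 < 1 - α := sub_pos.2 hα1
  have hΔ0 : 0 ≤ Δ := (div_nonneg (by positivity) hc.le).trans hΔ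
  have hΔ' : 5 * α ^ 2 ≤ Δ * (1 - α) := (div_le_iff₀ hc).1 hΔ
  calc hawkesBinVariance μ α Δ
      ≤ μ * Δ / (1 - α) ^ 3 + α ^ 2 * μ / (2 * (1 - α) ^ 4) :=
        hawkesBinVariance_le_linear_add_const hμ.le hα0.le hα1 hΔ0
    _ ≤ μ * Δ / (1 - α) ^ 3 + 0.1 * (μ * Δ / (1 - α) ^ 3) := by
        gcongr
        exact const_le_tenth_linear_of_five_sq_le hμ.le hα1 hΔ'
    _ = 1.1 * (μ * Δ / (1 - α) ^ 3) := by ring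

/-- For `μ > 0`, `0 < α < 1` and `Δ ≥ 5α²/(1-α)`, the stationary Hawkes bin-count variance
`σ²(Δ)` is at most `1.1 · μΔ/(1-α)³`. -/
theorem hawkes_variance_upper_bound (μ α Δ : ℝ) (hμ : 0 < μ) (hα0 : 0 < α) (hα1 : α < 1)
    (hΔ0 : 0 < Δ) (hΔ : Δ ≥ 5 * α ^ 2 / (1 - α)) :
    μ * Δ / (1 - α) ^ 3
      + α ^ 2 * μ * (1 - Real.exp (-2 * (1 - α) * Δ)) / (2 * (1 - α) ^ 4)
      - 2 * α * μ * (1 - Real.exp (-(1 - α) * Δ)) / (1 - α) ^ 4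
      ≤ 1.1 * (μ * Δ / (1 - α) ^ 3) :=
  hawkes_variance_upper_bound_general μ α Δ hμ hα0 hα1 hΔ
end

section
/- Let μ > 0, 0 < α < 1, and Δ > 0. Define σ²(Δ) = μΔ/(1-α)³ + α²μ(1 - e^{-2(1-α)Δ})/(2(1-α)⁴) - 2αμ(1 - e^{-(1-α)Δ})/(1-α)⁴. Then |σ²(Δ)/Δ - μ/(1-α)³| ≤ 4μ/((1-α)⁴ Δ). -/
open Real

/-! Subtracting the linear term `μΔ/(1-α)³` leaves `μ (α² a - 4α b) / (2(1-α)⁴)` with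
`a = 1 - e^{-2(1-α)Δ}` and `b = 1 - e^{-(1-α)Δ}` both in `[0, 1]`, so the remainder is at most
`4μ/(2(1-α)⁴)` in absolute value and dividing by `Δ` gives the bound (with a factor `2` to spare). -/

lemma Real.one_sub_exp_mem_Icc {x : ℝ} (hx : x ≤ 0) : 1 - exp x ∈ Set.Icc 0 1 :=
  ⟨sub_nonneg.mpr (exp_le_one_iff.mpr hx), by linarith [exp_pos x]⟩

lemma abs_sq_mul_sub_four_mul_le {α a b : ℝ} (hα : α ∈ Set.Icc 0 1) (ha : a ∈ Set.Icc 0 1)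
    (hb : b ∈ Set.Icc 0 1) : |α ^ 2 * a - 4 * α * b| ≤ 4 := by
  obtain ⟨hα0, hα1⟩ := hα
  obtain ⟨ha0, ha1⟩ := ha
  obtain ⟨hb0, hb1⟩ := hb
  have hsq : α ^ 2 * a ∈ Set.Icc 0 1 :=
    ⟨by positivity, mul_le_one₀ (pow_le_one₀ hα0 hα1) ha0 ha1⟩
  have hlin : 4 * α * b ∈ Set.Icc 0 4 :=
    ⟨by positivity, by nlinarith [mul_le_one₀ hα1 hb0 hb1]⟩
  rw [abs_le]
  constructor <;> linarith [hsq.1, hsq.2, hlin.1, hlin.2]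

lemma hawkes_variance_div_sub_eq {μ α β Δ a b : ℝ} (hβ : β ≠ 0) (hΔ : Δ ≠ 0) :
    (μ * Δ / β ^ 3 + α ^ 2 * μ * a / (2 * β ^ 4) - 2 * α * μ * b / β ^ 4) / Δ - μ / β ^ 3
      = μ * (α ^ 2 * a - 4 * α * b) / (2 * β ^ 4 * Δ) := by
  field_simp
  ring

/-- For `μ > 0`, `0 < α < 1` and `Δ > 0`, the rescaled stationary Hawkes bin-count variance
`σ²(Δ)/Δ` is within `4μ/((1-α)⁴Δ)` of `μ/(1-α)³`. -/
theorem hawkes_variance_ratio_bound (μ α Δ : ℝ) (hμ : 0 < μ) (hα0 : 0 < α) (hα1 : α < 1)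
    (hΔ0 : 0 < Δ) :
    |(μ * Δ / (1 - α) ^ 3
        + α ^ 2 * μ * (1 - Real.exp (-2 * (1 - α) * Δ)) / (2 * (1 - α) ^ 4)
        - 2 * α * μ * (1 - Real.exp (-(1 - α) * Δ)) / (1 - α) ^ 4) / Δ
      - μ / (1 - α) ^ 3|
      ≤ 4 * μ / ((1 - α) ^ 4 * Δ) := by
  have hβ : 0 < 1 - α := by linarith
  have hden : 0 < (1 - α) ^ 4 * Δ := by positivity
  have hremainder := abs_sq_mul_sub_four_mul_le ⟨hα0.le, hα1.le⟩
    (one_sub_exp_mem_Icc (by nlinarith : -2 * (1 - α) * Δ ≤ 0))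
    (one_sub_exp_mem_Icc (by nlinarith : -(1 - α) * Δ ≤ 0))
  rw [hawkes_variance_div_sub_eq hβ.ne' hΔ0.ne', abs_div, abs_mul, abs_of_pos hμ,
    mul_assoc 2, abs_of_pos (by positivity : (0 : ℝ) < 2 * ((1 - α) ^ 4 * Δ)),
    div_le_div_iff₀ (by positivity) hden]
  nlinarith [mul_le_mul_of_nonneg_left hremainder hμ.le]
end

section
/- Let 0 < μ_lower ≤ μ ≤ μ_upper and 0 < α_lower ≤ α ≤ α_upper < 1 be reals, and let 0 < ξ ≤ μ_lower/6. Set ϑ = μ/(1-α) and ω = μ/(1-α)³. Suppose ϑ̂ and ω̂ are reals with |ϑ̂ - ϑ| < ξ and |ω̂ - ω| < 2ξ, and suppose α̂ and μ̂ are defined by 1 - α̂ = √(ϑ̂/ω̂) and μ̂ = ϑ̂(1 - α̂), with α̂ ≤ α_upper. Then |α - α̂| ≤ C₅·ξ and |μ - μ̂| ≤ C₆·ξ, where C₅ = 6/(μ_lower(1-α_upper)) and C₆ = 1 + 6μ_upper/(μ_lower(1-α_upper)²) + 1/(1-α_upper). -/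
/-!
With `s = 1 - α` the true parameters satisfy `ϑ = s² ω` and the estimates satisfy `ŝ² ω̂ = ϑ̂`
exactly, so `(ŝ² - s²) ω̂ = (ϑ̂ - ϑ) - s² (ω̂ - ω)` has size at most `3ξ`. Since `ŝ + s ≥ 1 - α_upper`
and `ω̂ ≥ ω - 2ξ ≥ 2μ_lower/3`, this bounds `|ŝ - s|`. For the baseline intensity,
`μ - μ̂ = s (ϑ - ϑ̂) + ϑ̂ (s - ŝ)` with `ϑ̂ ≤ μ_upper/(1 - α_upper) + ξ`.
-/

open Real

lemma abs_sub_mul_le_abs_sq_sub {s t : ℝ} (hs : 0 ≤ s) (ht : 0 ≤ t) :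
    |t - s| * s ≤ |t ^ 2 - s ^ 2| := by
  rw [sq_sub_sq, abs_mul, abs_of_nonneg (add_nonneg ht hs), mul_comm (t + s)]
  exact mul_le_mul_of_nonneg_left (by linarith) (abs_nonneg _)

lemma abs_sqrt_div_sub_mul_le {x y s : ℝ} (hx : 0 ≤ x) (hy : 0 < y) (hs : 0 ≤ s) :
    |√(x / y) - s| * (s * y) ≤ |x - s ^ 2 * y| := by
  have hsq : x - s ^ 2 * y = (√(x / y) ^ 2 - s ^ 2) * y := by
    rw [sub_mul, sq_sqrt (div_nonneg hx hy.le), div_mul_cancel₀ x hy.ne']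
  rw [hsq, abs_mul, abs_of_pos hy, ← mul_assoc]
  exact mul_le_mul_of_nonneg_right (abs_sub_mul_le_abs_sq_sub hs (sqrt_nonneg _)) hy.le

section Hawkes

variable {μlow μ μup α αup ξ ϑhat ωhat : ℝ}

theorem hawkes_one_sub_alpha_estimate (hμlow : 0 < μlow) (hμ : μlow ≤ μ) (hα0 : 0 ≤ α)
    (hα : α ≤ αup) (hαup : αup < 1) (hξ : ξ ≤ μlow / 6)
    (hϑ : |ϑhat - μ / (1 - α)| < ξ) (hω : |ωhat - μ / (1 - α) ^ 3| < 2 * ξ) :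
    |(1 - α) - √(ϑhat / ωhat)| ≤ 6 / (μlow * (1 - αup)) * ξ := by
  set s := 1 - α
  have hs_low : 1 - αup ≤ s := by linarith
  have hs_pos : 0 < s := by linarith
  have hs_le : s ≤ 1 := by linarith
  have hξ0 : 0 ≤ ξ := (abs_nonneg _).trans hϑ.le
  have hϑ_low : μlow ≤ μ / s := hμ.trans (le_div_self (by linarith) hs_pos hs_le)
  have hω_low : μlow ≤ μ / s ^ 3 :=
    hμ.trans (le_div_self (by linarith) (by positivity) (pow_le_one₀ hs_pos.le hs_le))
  obtain ⟨hϑ₁, -⟩ := abs_lt.mp hϑ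
  obtain ⟨hω₁, -⟩ := abs_lt.mp hω
  have hωhat : 2 / 3 * μlow ≤ ωhat := by linarith
  have hresidual : |ϑhat - s ^ 2 * ωhat| ≤ 3 * ξ :=
    calc |ϑhat - s ^ 2 * ωhat| = |(ϑhat - μ / s) - s ^ 2 * (ωhat - μ / s ^ 3)| := by
          congr 1; field_simp; ring
      _ ≤ |ϑhat - μ / s| + s ^ 2 * |ωhat - μ / s ^ 3| := by
          rw [← abs_of_nonneg (sq_nonneg s), ← abs_mul, abs_of_nonneg (sq_nonneg s)]
          exact abs_sub _ _
      _ ≤ ξ + 1 * (2 * ξ) := by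
          gcongr
          exact pow_le_one₀ hs_pos.le hs_le
      _ = 3 * ξ := by ring
  have hkey : |s - √(ϑhat / ωhat)| * (s * ωhat) ≤ 3 * ξ := by
    rw [abs_sub_comm]
    exact (abs_sqrt_div_sub_mul_le (by linarith) (by linarith) hs_pos.le).trans hresidual
  calc |s - √(ϑhat / ωhat)| ≤ 3 * ξ / (s * ωhat) :=
        (le_div_iff₀ (by nlinarith)).mpr hkey
    _ ≤ 3 * ξ / ((1 - αup) * (2 / 3 * μlow)) := by
        gcongr
    _ = 9 / 2 / (μlow * (1 - αup)) * ξ := by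
        field_simp
        ring
    _ ≤ 6 / (μlow * (1 - αup)) * ξ := by
        gcongr
        norm_num

theorem hawkes_mu_estimate {shat : ℝ} (hμlow : 0 < μlow) (hμ₁ : μlow ≤ μ) (hμ₂ : μ ≤ μup)
    (hα0 : 0 ≤ α) (hα : α ≤ αup) (hαup : αup < 1) (hξ : ξ ≤ μlow / 6)
    (hϑ : |ϑhat - μ / (1 - α)| < ξ) (hs : |(1 - α) - shat| ≤ 6 / (μlow * (1 - αup)) * ξ) :
    |μ - ϑhat * shat| ≤ (1 + 6 * μup / (μlow * (1 - αup) ^ 2) + 1 / (1 - αup)) * ξ := by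
  set s := 1 - α
  have hαup_pos : 0 < 1 - αup := by linarith
  have hs_pos : 0 < s := by linarith
  have hμ_pos : 0 < μ := by linarith
  have hμup_pos : 0 < μup := by linarith
  have hϑ_up : μ / s ≤ μup / (1 - αup) :=
    div_le_div₀ (by linarith) hμ₂ hαup_pos (by linarith)
  have hϑhat : |ϑhat| ≤ μup / (1 - αup) + μlow / 6 := by
    have := abs_sub_abs_le_abs_sub ϑhat (μ / s)
    rw [abs_of_pos (by positivity : 0 < μ / s)] at this
    linarith
  calc |μ - ϑhat * shat| = |s * (μ / s - ϑhat) + ϑhat * (s - shat)| := by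
        congr 1; field_simp; ring
    _ ≤ 1 * ξ + (μup / (1 - αup) + μlow / 6) * (6 / (μlow * (1 - αup)) * ξ) := by
        refine (abs_add_le _ _).trans ?_
        rw [abs_mul, abs_mul, abs_of_pos hs_pos, abs_sub_comm (μ / s)]
        gcongr
        linarith
    _ = (1 + 6 * μup / (μlow * (1 - αup) ^ 2) + 1 / (1 - αup)) * ξ := by
        field_simp
        ring

end Hawkes

theorem hawkes_param_estimation_error_general
    (μlow μ μup αlow α αup ξ ϑhat ωhat αhat μhat : ℝ)
    (hμlow : 0 < μlow) (hμ1 : μlow ≤ μ) (hμ2 : μ ≤ μup)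
    (hαlow : 0 < αlow) (hα1 : αlow ≤ α) (hα2 : α ≤ αup) (hαup : αup < 1)
    (hξ : ξ ≤ μlow / 6)
    (hϑ : |ϑhat - μ / (1 - α)| < ξ)
    (hω : |ωhat - μ / (1 - α) ^ 3| < 2 * ξ)
    (hαhat : 1 - αhat = Real.sqrt (ϑhat / ωhat))
    (hμhat : μhat = ϑhat * (1 - αhat)) :
    |α - αhat| ≤ 6 / (μlow * (1 - αup)) * ξ ∧
      |μ - μhat| ≤ (1 + 6 * μup / (μlow * (1 - αup) ^ 2) + 1 / (1 - αup)) * ξ := by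
  have hα0 : 0 ≤ α := by linarith
  have hs : |(1 - α) - (1 - αhat)| ≤ 6 / (μlow * (1 - αup)) * ξ :=
    hαhat ▸ hawkes_one_sub_alpha_estimate hμlow hμ1 hα0 hα2 hαup hξ hϑ hω
  refine ⟨?_, hμhat ▸ hawkes_mu_estimate hμlow hμ1 hμ2 hα0 hα2 hαup hξ hϑ hs⟩
  rwa [abs_sub_comm, ← sub_sub_sub_cancel_left α αhat 1]

/-- Deterministic core of the non-private estimation bound: if the rescaled sample mean
`ϑ̂` is within `ξ` of `ϑ = μ/(1-α)` and the rescaled sample variance `ω̂` is within `2ξ`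
of `ω = μ/(1-α)³`, then the estimates `α̂, μ̂` obtained from `1-α̂ = √(ϑ̂/ω̂)` and
`μ̂ = ϑ̂(1-α̂)` satisfy `|α - α̂| ≤ C₅ξ` and `|μ - μ̂| ≤ C₆ξ`. -/
theorem hawkes_param_estimation_error
    (μlow μ μup αlow α αup ξ ϑhat ωhat αhat μhat : ℝ)
    (hμlow : 0 < μlow) (hμ1 : μlow ≤ μ) (hμ2 : μ ≤ μup)
    (hαlow : 0 < αlow) (hα1 : αlow ≤ α) (hα2 : α ≤ αup) (hαup : αup < 1)
    (hξ0 : 0 < ξ) (hξ : ξ ≤ μlow / 6)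
    (hϑ : |ϑhat - μ / (1 - α)| < ξ)
    (hω : |ωhat - μ / (1 - α) ^ 3| < 2 * ξ)
    (hαhat : 1 - αhat = Real.sqrt (ϑhat / ωhat))
    (hμhat : μhat = ϑhat * (1 - αhat))
    (hαhatup : αhat ≤ αup) :
    |α - αhat| ≤ 6 / (μlow * (1 - αup)) * ξ ∧
      |μ - μhat| ≤ (1 + 6 * μup / (μlow * (1 - αup) ^ 2) + 1 / (1 - αup)) * ξ :=
  hawkes_param_estimation_error_general μlow μ μup αlow α αup ξ ϑhat ωhat αhat μhat hμlow hμ1 hμ2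
    hαlow hα1 hα2 hαup hξ hϑ hω hαhat hμhat
end

section
/- Let K ≥ 2 and B ≥ 1 be integers, and let Δ > 0 and C > 0 be reals. Let y₁,…,y_K be nonnegative integers with mean ȳ = (1/K)∑_{i=1}^K y_i, and suppose |y_i - ȳ| ≤ √(BΔ)·C for every i. Let b₁,…,b_K be nonnegative integers with ∑_{i=1}^K b_i = B. Then |(1/(K-1))∑_{i=1}^K (y_i + b_i - ȳ - B/K)² - (1/(K-1))∑_{i=1}^K (y_i - ȳ)²| ≤ B²/K + 2·B^{3/2}·√Δ·C/(K-1). -/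
/-!
Write `uᵢ = yᵢ - ȳ` and `vᵢ = bᵢ - B/K`. Since `∑ uᵢ = 0`, the sum of squares changes by
`2 ∑ uᵢ bᵢ + ∑ vᵢ²`. The cross term is at most `B · max |uᵢ|` because the `bᵢ` are nonnegative
with sum `B`, and `∑ vᵢ² = ∑ bᵢ² - B²/K ≤ B² - B²/K`.
-/

open Real Finset

namespace Finset

variable {ι : Type*} [Fintype ι]

lemma sum_sub_sum_div_card_eq_zero [Nonempty ι] (x : ι → ℝ) :
    ∑ i, (x i - (∑ j, x j) / Fintype.card ι) = 0 := by
  rw [sum_sub_distrib, sum_const, card_univ, nsmul_eq_mul]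
  field_simp
  ring

lemma sum_sq_sub_sum_div_card (x : ι → ℝ) :
    ∑ i, (x i - (∑ j, x j) / Fintype.card ι) ^ 2
      = ∑ i, x i ^ 2 - (∑ j, x j) ^ 2 / Fintype.card ι := by
  rcases isEmpty_or_nonempty ι with hι | hι
  · simp
  simp only [sub_sq, sum_add_distrib, sum_sub_distrib, ← sum_mul, ← mul_sum, sum_const,
    card_univ, nsmul_eq_mul]
  field_simp
  ring

lemma sum_sq_sub_sum_div_card_le_of_nonneg {w : ι → ℝ} (hw : ∀ i, 0 ≤ w i) :
    ∑ i, (w i - (∑ j, w j) / Fintype.card ι) ^ 2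
      ≤ (∑ j, w j) ^ 2 * (Fintype.card ι - 1) / Fintype.card ι := by
  rcases isEmpty_or_nonempty ι with hι | hι
  · simp
  have hcard : (0 : ℝ) < Fintype.card ι := by exact_mod_cast Fintype.card_pos
  rw [sum_sq_sub_sum_div_card, mul_sub, mul_one, sub_div, mul_div_cancel_right₀ _ hcard.ne']
  gcongr
  exact sum_sq_le_sq_sum_of_nonneg fun i _ => hw i

lemma sum_sq_add_sub_sum_div_card_sub_sum_sq {u : ι → ℝ} (hu : ∑ i, u i = 0) (w : ι → ℝ) :
    ∑ i, (u i + (w i - (∑ j, w j) / Fintype.card ι)) ^ 2 - ∑ i, u i ^ 2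
      = 2 * ∑ i, u i * w i + ∑ i, (w i - (∑ j, w j) / Fintype.card ι) ^ 2 := by
  set m := (∑ j, w j) / Fintype.card ι
  calc ∑ i, (u i + (w i - m)) ^ 2 - ∑ i, u i ^ 2
      = ∑ i, (2 * (u i * w i) - 2 * m * u i + (w i - m) ^ 2) := by
        rw [← sum_sub_distrib]
        exact sum_congr rfl fun i _ => by ring
    _ = 2 * ∑ i, u i * w i + ∑ i, (w i - m) ^ 2 := by
        rw [sum_add_distrib, sum_sub_distrib, ← mul_sum, ← mul_sum, hu, mul_zero, sub_zero]

lemma abs_sum_mul_le_of_abs_le {u w : ι → ℝ} {M : ℝ} (hu : ∀ i, |u i| ≤ M)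
    (hw : ∀ i, 0 ≤ w i) : |∑ i, u i * w i| ≤ M * ∑ i, w i :=
  calc |∑ i, u i * w i| ≤ ∑ i, |u i| * w i := by
        simpa only [abs_mul, abs_of_nonneg (hw _)] using
          abs_sum_le_sum_abs (fun i => u i * w i) univ
    _ ≤ ∑ i, M * w i := sum_le_sum fun i _ => mul_le_mul_of_nonneg_right (hu i) (hw i)
    _ = M * ∑ i, w i := (mul_sum ..).symm

lemma abs_sum_sq_add_sub_sum_sq_le {u w : ι → ℝ} {M : ℝ} (hu₀ : ∑ i, u i = 0)
    (hu : ∀ i, |u i| ≤ M) (hw : ∀ i, 0 ≤ w i) :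
    |∑ i, (u i + (w i - (∑ j, w j) / Fintype.card ι)) ^ 2 - ∑ i, u i ^ 2|
      ≤ 2 * (M * ∑ i, w i) + (∑ j, w j) ^ 2 * (Fintype.card ι - 1) / Fintype.card ι := by
  rw [sum_sq_add_sub_sum_div_card_sub_sum_sq hu₀]
  calc _ ≤ |2 * ∑ i, u i * w i| + |∑ i, (w i - (∑ j, w j) / Fintype.card ι) ^ 2| :=
        abs_add_le _ _
    _ = 2 * |∑ i, u i * w i| + ∑ i, (w i - (∑ j, w j) / Fintype.card ι) ^ 2 := by
        rw [abs_mul, abs_two, abs_of_nonneg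
          (sum_nonneg fun i _ => sq_nonneg (w i - (∑ j, w j) / Fintype.card ι))]
    _ ≤ _ := by
        gcongr
        · exact abs_sum_mul_le_of_abs_le hu hw
        · exact sum_sq_sub_sum_div_card_le_of_nonneg hw

end Finset

theorem sample_variance_sensitivity_general
    (K B : ℕ) (hK : 2 ≤ K) (Δ C : ℝ)
    (y b : Fin K → ℕ) (hbsum : ∑ i, b i = B)
    (hdev : ∀ i, |(y i : ℝ) - (∑ j, (y j : ℝ)) / K| ≤ Real.sqrt ((B : ℝ) * Δ) * C) :
    |(1 / ((K : ℝ) - 1)) *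
        ∑ i, ((y i : ℝ) + (b i : ℝ) - (∑ j, (y j : ℝ)) / K - (B : ℝ) / K) ^ 2
      - (1 / ((K : ℝ) - 1)) * ∑ i, ((y i : ℝ) - (∑ j, (y j : ℝ)) / K) ^ 2|
      ≤ (B : ℝ) ^ 2 / K + 2 * (B : ℝ) ^ ((3 : ℝ) / 2) * Real.sqrt Δ * C / ((K : ℝ) - 1) := by
  have hK₁ : (0 : ℝ) < K - 1 := by
    have : (2 : ℝ) ≤ K := by exact_mod_cast hK
    linarith
  have : Nonempty (Fin K) := ⟨⟨0, by omega⟩⟩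
  have hbsum' : ∑ i, (b i : ℝ) = B := by exact_mod_cast hbsum
  have hvar := abs_sum_sq_add_sub_sum_sq_le (w := fun i => (b i : ℝ))
    (by simpa using sum_sub_sum_div_card_eq_zero fun i => (y i : ℝ)) hdev
    (fun i => Nat.cast_nonneg (b i))
  simp only [hbsum', Fintype.card_fin, add_sub_assoc', sub_add_eq_add_sub] at hvar
  have hB₃₂ : (B : ℝ) ^ ((3 : ℝ) / 2) = B * √B := by
    rw [show (3 : ℝ) / 2 = 1 + 1 / 2 by norm_num, rpow_add' (Nat.cast_nonneg B) (by norm_num),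
      rpow_one, ← sqrt_eq_rpow]
  rw [← mul_sub, abs_mul, abs_of_pos (one_div_pos.2 hK₁)]
  calc _ ≤ 1 / ((K : ℝ) - 1) * (2 * (√(B * Δ) * C * B) + (B : ℝ) ^ 2 * (K - 1) / K) := by
        gcongr
    _ = _ := by
        rw [sqrt_mul (Nat.cast_nonneg B), hB₃₂]
        field_simp
        ring

/-- Sensitivity of the unbiased sample variance: adding `B` extra events `b₁,…,b_K`
(with `∑ bᵢ = B`) to bin counts `y₁,…,y_K` satisfying the per-bin deviation bound
`|yᵢ - ȳ| ≤ √(BΔ)·C` changes the sample variance by at most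
`B²/K + 2B^{3/2}√Δ·C/(K-1)`. -/
theorem sample_variance_sensitivity
    (K B : ℕ) (hK : 2 ≤ K) (hB : 1 ≤ B) (Δ C : ℝ) (hΔ : 0 < Δ) (hC : 0 < C)
    (y b : Fin K → ℕ) (hbsum : ∑ i, b i = B)
    (hdev : ∀ i, |(y i : ℝ) - (∑ j, (y j : ℝ)) / K| ≤ Real.sqrt ((B : ℝ) * Δ) * C) :
    |(1 / ((K : ℝ) - 1)) *
        ∑ i, ((y i : ℝ) + (b i : ℝ) - (∑ j, (y j : ℝ)) / K - (B : ℝ) / K) ^ 2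
      - (1 / ((K : ℝ) - 1)) * ∑ i, ((y i : ℝ) - (∑ j, (y j : ℝ)) / K) ^ 2|
      ≤ (B : ℝ) ^ 2 / K + 2 * (B : ℝ) ^ ((3 : ℝ) / 2) * Real.sqrt Δ * C / ((K : ℝ) - 1) :=
  sample_variance_sensitivity_general K B hK Δ C y b hbsum hdev
end
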